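/- (Structure of the optimal fractional area-bound solution.) Assume tasks are sorted by non-decreasing acceleration factor α_j = p̄_j/p_j. Let i be an index such that (1/m)·sum_{j<=i} p̄_j >= (1/k)·sum_{j>i} p_j and (1/m)·sum_{j<i} p̄_j <= (1/k)·sum_{j>=i} p_j. Then LB = (p_i · sum_{j<i} p̄_j + p̄_i · sum_{j>i} p_j + p̄_i·p_i) / (k·p̄_i + m·p_i) is a lower bound on the optimal makespan for scheduling these independent tasks on m CPUs and k GPUs. -/

import Mathlib

/-
In a schedule of makespan `C`, the busy intervals on each processor are disjoint subsets of
`[0, C)`, so the CPU load `∑_{CPU} pc j` is at most `m C` and the GPU load `∑_{GPU} pg j` at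
most `k C`. Adding `pg i` times the first inequality to `pc i` times the second bounds
`∑_j min (pg i * pc j) (pc i * pg j)` by `(k pc i + m pg i) C`; this holds for every fractional
assignment. Because the tasks are sorted by `pc j / pg j`, the minimum is `pg i * pc j` for
`j < i` and `pc i * pg j` for `j > i`, so the sum is exactly the numerator of `LB`.
-/

/-- A non-preemptive schedule of tasks (indexed by `ι`) on a heterogeneous
platform with `m` CPUs and `k` GPUs; task `j` takes time `pc j` on a CPU and
`pg j` on a GPU. `cpu j = true` means `j` runs on CPU number `proc j`. -/
structure Sched (ι : Type) (m k : ℕ) (pc pg : ι → ℝ) where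
  cpu : ι → Bool
  proc : ι → ℕ
  hproc : ∀ j, proc j < if cpu j then m else k
  start : ι → ℝ
  hstart : ∀ j, 0 ≤ start j
  disj : ∀ i j : ι, i ≠ j → cpu i = cpu j → proc i = proc j →
    start i + (if cpu i then pc i else pg i) ≤ start j ∨
    start j + (if cpu j then pc j else pg j) ≤ start i

/-- Processing time of task `j` on its assigned resource type. -/
def Sched.ptime {ι : Type} {m k : ℕ} {pc pg : ι → ℝ} (S : Sched ι m k pc pg)
    (j : ι) : ℝ :=
  if S.cpu j then pc j else pg j

/-- Completion time of task `j`. -/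
def Sched.finish {ι : Type} {m k : ℕ} {pc pg : ι → ℝ} (S : Sched ι m k pc pg)
    (j : ι) : ℝ :=
  S.start j + S.ptime j

/-- Processor `q` of type `b` (`true` = CPU) is busy at time `t`. -/
def Sched.busyAt {ι : Type} {m k : ℕ} {pc pg : ι → ℝ} (S : Sched ι m k pc pg)
    (b : Bool) (q : ℕ) (t : ℝ) : Prop :=
  ∃ j, S.cpu j = b ∧ S.proc j = q ∧ S.start j ≤ t ∧ t < S.finish j

/-- Makespan: maximum completion time. -/
noncomputable def Sched.makespan {ι : Type} [Fintype ι] {m k : ℕ} {pc pg : ι → ℝ}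
    (hne : Nonempty ι) (S : Sched ι m k pc pg) : ℝ :=
  Finset.univ.sup' (Finset.univ_nonempty_iff.mpr hne) S.finish

/-- List schedule: no processor (of either type) is idle while an
unstarted task remains. -/
def Sched.isList {ι : Type} {m k : ℕ} {pc pg : ι → ℝ}
    (S : Sched ι m k pc pg) : Prop :=
  ∀ t : ℝ, 0 ≤ t →
    (∃ (b : Bool) (q : ℕ), q < (if b then m else k) ∧ ¬ S.busyAt b q t) →
    ∀ j, S.start j ≤ t

open Finset MeasureTheory

theorem sum_le_of_pairwiseDisjoint_Ico {ι : Type*} {T : Finset ι} {s p : ι → ℝ} {a b : ℝ}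
    (hab : a ≤ b) (hp : ∀ j ∈ T, 0 ≤ p j) (hsub : ∀ j ∈ T, a ≤ s j ∧ s j + p j ≤ b)
    (hdisj : (T : Set ι).PairwiseDisjoint fun j => Set.Ico (s j) (s j + p j)) :
    ∑ j ∈ T, p j ≤ b - a := by
  have hunion : volume (⋃ j ∈ T, Set.Ico (s j) (s j + p j)) ≤ volume (Set.Ico a b) :=
    measure_mono <| Set.iUnion₂_subset fun j hj =>
      Set.Ico_subset_Ico (hsub j hj).1 (hsub j hj).2
  rw [measure_biUnion_finset hdisj fun _ _ => measurableSet_Ico] at hunion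
  simp only [Real.volume_Ico, add_sub_cancel_left] at hunion
  rwa [← ENNReal.ofReal_sum_of_nonneg hp, ENNReal.ofReal_le_ofReal_iff (sub_nonneg.2 hab)] at hunion

theorem sum_eq_sum_filter_lt_add_sum_filter_gt_add {α M : Type*} [Fintype α] [LinearOrder α]
    [AddCommMonoid M] (f : α → M) (i : α) :
    ∑ j, f j = ∑ j ∈ univ.filter (fun j => j < i), f j
      + ∑ j ∈ univ.filter (fun j => i < j), f j + f i := by
  have hge : univ.filter (fun j => ¬ j < i) = insert i (univ.filter (fun j => i < j)) := by
    ext j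
    simp [le_iff_eq_or_lt, eq_comm]
  rw [← sum_filter_add_sum_filter_not univ (fun j => j < i), hge, sum_insert (by simp),
    add_comm (f i), add_assoc]

section FractionalBound

variable {ι : Type*} [Fintype ι] [LinearOrder ι] {pc pg : ι → ℝ}

/-- Sorting by `pc / pg` makes `pg i * pc j` the smaller cost before the pivot and
`pc i * pg j` the smaller one after it. -/
theorem pivot_numerator_eq_sum_min (hsorted : ∀ i j : ι, i ≤ j → pc i * pg j ≤ pc j * pg i)
    (i : ι) :
    pg i * ∑ j ∈ univ.filter (fun j => j < i), pc j + pc i * ∑ j ∈ univ.filter (fun j => i < j), pg j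
        + pc i * pg i = ∑ j, min (pg i * pc j) (pc i * pg j) := by
  rw [sum_eq_sum_filter_lt_add_sum_filter_gt_add _ i, mul_sum, mul_sum, mul_comm (pg i) (pc i),
    min_self]
  congr 2
  · refine sum_congr rfl fun j hj => (min_eq_left ?_).symm
    linarith [hsorted j i (mem_filter.1 hj).2.le, mul_comm (pg i) (pc j)]
  · refine sum_congr rfl fun j hj => (min_eq_right ?_).symm
    linarith [hsorted i j (mem_filter.1 hj).2.le, mul_comm (pg i) (pc j)]

/-- `x j` is the share of task `j` run on CPUs in the fractional relaxation; the right-hand side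
combines its CPU and GPU load constraints with weights `pg i` and `pc i`. -/
theorem pivot_numerator_le_of_fractional
    (hsorted : ∀ i j : ι, i ≤ j → pc i * pg j ≤ pc j * pg i) (i : ι) {x : ι → ℝ}
    (hx0 : ∀ j, 0 ≤ x j) (hx1 : ∀ j, x j ≤ 1) :
    pg i * ∑ j ∈ univ.filter (fun j => j < i), pc j + pc i * ∑ j ∈ univ.filter (fun j => i < j), pg j
        + pc i * pg i ≤ pg i * ∑ j, pc j * x j + pc i * ∑ j, pg j * (1 - x j) := by
  rw [pivot_numerator_eq_sum_min hsorted, mul_sum, mul_sum, ← sum_add_distrib]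
  gcongr with j
  calc min (pg i * pc j) (pc i * pg j)
      ≤ x j • (pg i * pc j) + (1 - x j) • (pc i * pg j) :=
        Convex.min_le_combo _ _ (hx0 j) (sub_nonneg.2 (hx1 j)) (add_sub_cancel _ _)
    _ = pg i * (pc j * x j) + pc i * (pg j * (1 - x j)) := by simp only [smul_eq_mul]; ring

end FractionalBound

namespace Sched

variable {ι : Type} {m k : ℕ} {pc pg : ι → ℝ} (S : Sched ι m k pc pg)

theorem ptime_nonneg (hpc : ∀ j, 0 ≤ pc j) (hpg : ∀ j, 0 ≤ pg j) (j : ι) : 0 ≤ S.ptime j := by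
  rw [ptime]
  split_ifs
  exacts [hpc j, hpg j]

theorem finish_le_makespan [Fintype ι] (hne : Nonempty ι) (j : ι) :
    S.finish j ≤ S.makespan hne :=
  le_sup' S.finish (mem_univ j)

theorem makespan_nonneg [Fintype ι] (hne : Nonempty ι) (hpt : ∀ j, 0 ≤ S.ptime j) :
    0 ≤ S.makespan hne :=
  (add_nonneg (S.hstart hne.some) (hpt hne.some)).trans (S.finish_le_makespan hne hne.some)

/-- The solution of the fractional relaxation induced by the schedule. -/
def cpuShare (j : ι) : ℝ := if S.cpu j then 1 else 0

theorem cpuShare_nonneg (j : ι) : 0 ≤ S.cpuShare j := by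
  unfold cpuShare; split_ifs <;> norm_num

theorem cpuShare_le_one (j : ι) : S.cpuShare j ≤ 1 := by
  unfold cpuShare; split_ifs <;> norm_num

theorem sum_mul_cpuShare [Fintype ι] :
    ∑ j, pc j * S.cpuShare j = ∑ j ∈ univ.filter (fun j => S.cpu j = true), S.ptime j := by
  rw [sum_filter]
  refine sum_congr rfl fun j _ => ?_
  unfold cpuShare ptime
  split_ifs <;> simp

theorem sum_mul_one_sub_cpuShare [Fintype ι] :
    ∑ j, pg j * (1 - S.cpuShare j) = ∑ j ∈ univ.filter (fun j => S.cpu j = false), S.ptime j := by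
  rw [sum_filter]
  refine sum_congr rfl fun j _ => ?_
  unfold cpuShare ptime
  split_ifs <;> simp_all

section Loads

variable [Fintype ι] (hpt : ∀ j, 0 ≤ S.ptime j) {C : ℝ} (hC : 0 ≤ C)
  (hfin : ∀ j, S.finish j ≤ C)
include hpt hC hfin

theorem sum_ptime_proc_le (b : Bool) (q : ℕ) :
    ∑ j ∈ (univ.filter fun j => S.cpu j = b).filter (fun j => S.proc j = q), S.ptime j ≤ C := by
  refine (sum_le_of_pairwiseDisjoint_Ico hC (fun j _ => hpt j)
    (fun j _ => ⟨S.hstart j, hfin j⟩) ?_).trans_eq (sub_zero C)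
  intro j hj l hl hjl
  simp only [mem_coe, mem_filter, mem_univ, true_and] at hj hl
  rcases S.disj j l hjl (hj.1.trans hl.1.symm) (hj.2.trans hl.2.symm) with h | h
  · exact Set.Ico_disjoint_Ico_same.mono (Set.Ico_subset_Ico_right h) subset_rfl
  · exact (Set.Ico_disjoint_Ico_same.mono (Set.Ico_subset_Ico_right h) subset_rfl).symm

theorem sum_ptime_filter_cpu_le (b : Bool) :
    ∑ j ∈ univ.filter (fun j => S.cpu j = b), S.ptime j ≤ ((if b then m else k : ℕ) : ℝ) * C := by
  have hmaps : ∀ j ∈ univ.filter (fun j => S.cpu j = b),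
      S.proc j ∈ range (if b then m else k) := by
    intro j hj
    rw [mem_range, ← (mem_filter.1 hj).2]
    exact S.hproc j
  rw [← sum_fiberwise_of_maps_to hmaps]
  calc _ ≤ #(range (if b then m else k)) • C :=
        sum_le_card_nsmul _ _ _ fun q _ => S.sum_ptime_proc_le hpt hC hfin b q
    _ = _ := by rw [card_range, nsmul_eq_mul]

end Loads

theorem pivot_numerator_le [Fintype ι] [LinearOrder ι]
    (hsorted : ∀ i j : ι, i ≤ j → pc i * pg j ≤ pc j * pg i)
    (hpc : ∀ j, 0 ≤ pc j) (hpg : ∀ j, 0 ≤ pg j) {C : ℝ} (hC : 0 ≤ C)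
    (hfin : ∀ j, S.finish j ≤ C) (i : ι) :
    pg i * ∑ j ∈ univ.filter (fun j => j < i), pc j + pc i * ∑ j ∈ univ.filter (fun j => i < j), pg j
        + pc i * pg i ≤ (k * pc i + m * pg i) * C := by
  have hpt := S.ptime_nonneg hpc hpg
  have hcpu : ∑ j, pc j * S.cpuShare j ≤ m * C := by
    simpa [sum_mul_cpuShare] using S.sum_ptime_filter_cpu_le hpt hC hfin true
  have hgpu : ∑ j, pg j * (1 - S.cpuShare j) ≤ k * C := by
    simpa [sum_mul_one_sub_cpuShare] using S.sum_ptime_filter_cpu_le hpt hC hfin false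
  calc _ ≤ pg i * ∑ j, pc j * S.cpuShare j + pc i * ∑ j, pg j * (1 - S.cpuShare j) :=
        pivot_numerator_le_of_fractional hsorted i S.cpuShare_nonneg S.cpuShare_le_one
    _ ≤ pg i * (m * C) + pc i * (k * C) :=
        add_le_add (mul_le_mul_of_nonneg_left hcpu (hpg i)) (mul_le_mul_of_nonneg_left hgpu (hpc i))
    _ = (k * pc i + m * pg i) * C := by ring

end Sched

theorem pivot_area_lower_bound_general
    (n m k : ℕ) (hn : 0 < n)
    (pc pg : Fin n → ℝ) (hpc : ∀ j, 0 < pc j) (hpg : ∀ j, 0 < pg j)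
    (hsorted : ∀ i j : Fin n, i ≤ j → pc i * pg j ≤ pc j * pg i)
    (i : Fin n)
    (LB : ℝ)
    (hLB : LB = (pg i * (∑ j ∈ Finset.univ.filter (fun j => j < i), pc j) +
                 pc i * (∑ j ∈ Finset.univ.filter (fun j => i < j), pg j) +
                 pc i * pg i) / (k * pc i + m * pg i))
    (S : Sched (Fin n) m k pc pg) :
    LB ≤ Sched.makespan ⟨⟨0, hn⟩⟩ S := by
  have hpc' j := (hpc j).le
  have hpg' j := (hpg j).le
  have hC := S.makespan_nonneg ⟨⟨0, hn⟩⟩ (S.ptime_nonneg hpc' hpg')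
  have hD : (0 : ℝ) ≤ k * pc i + m * pg i := by have := hpc' i; have := hpg' i; positivity
  rw [hLB]
  exact div_le_of_le_mul₀ hD hC <|
    (S.pivot_numerator_le hsorted hpc' hpg' hC (S.finish_le_makespan _) i).trans_eq (mul_comm _ _)

/-- closed-form area-bound lower bound.  With tasks sorted by
non-decreasing acceleration factor `α_j = pc j / pg j` and pivot task `i`
satisfying the two balance conditions, the quantity
`LB = (pg i·∑_{j<i} pc j + pc i·∑_{j>i} pg j + pc i·pg i)/(k·pc i + m·pg i)`
is a lower bound on the makespan of every feasible schedule. -/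
theorem pivot_area_lower_bound
    (n m k : ℕ) (hn : 0 < n) (hm : 0 < m) (hk : 0 < k)
    (pc pg : Fin n → ℝ) (hpc : ∀ j, 0 < pc j) (hpg : ∀ j, 0 < pg j)
    (hsorted : ∀ i j : Fin n, i ≤ j → pc i * pg j ≤ pc j * pg i)
    (i : Fin n)
    (h1 : (1 / (k : ℝ)) * ∑ j ∈ Finset.univ.filter (fun j => i < j), pg j ≤
          (1 / (m : ℝ)) * ∑ j ∈ Finset.univ.filter (fun j => j ≤ i), pc j)
    (h2 : (1 / (m : ℝ)) * ∑ j ∈ Finset.univ.filter (fun j => j < i), pc j ≤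
          (1 / (k : ℝ)) * ∑ j ∈ Finset.univ.filter (fun j => i ≤ j), pg j)
    (LB : ℝ)
    (hLB : LB = (pg i * (∑ j ∈ Finset.univ.filter (fun j => j < i), pc j) +
                 pc i * (∑ j ∈ Finset.univ.filter (fun j => i < j), pg j) +
                 pc i * pg i) / (k * pc i + m * pg i))
    (S : Sched (Fin n) m k pc pg) :
    LB ≤ Sched.makespan ⟨⟨0, hn⟩⟩ S :=
  pivot_area_lower_bound_general n m k hn pc pg hpc hpg hsorted i LB hLB S
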